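/- No-cloning theorem: there is no unitary operator U on H ⊗ H and fixed state |e⟩ ∈ H such that U(|ψ⟩ ⊗ |e⟩) = |ψ⟩ ⊗ |ψ⟩ for all unit vectors |ψ⟩ in H, provided dim H ≥ 2. -/

import Mathlib

/-!
An inner-product-preserving cloner `U` gives, for unit vectors `ψ, φ`,
`⟪ψ, φ⟫ = ⟪ψ ⊗ e, φ ⊗ e⟫ = ⟪ψ ⊗ ψ, φ ⊗ φ⟫ = ⟪ψ, φ⟫²`, so `⟪ψ, φ⟫ ∈ {0, 1}`.
In dimension at least two, superposing two orthonormal vectors produces unit vectors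
with inner product `1 / 2`.
-/

open scoped InnerProductSpace ComplexInnerProductSpace

section

variable {𝕜 E F : Type*} [RCLike 𝕜] [NormedAddCommGroup E] [InnerProductSpace 𝕜 E]
  [NormedAddCommGroup F] [InnerProductSpace 𝕜 F]

theorem inner_mul_self_eq_of_clones {T : E → E → F}
    (hT : ∀ a b c d : E, ⟪T a b, T c d⟫_𝕜 = ⟪a, c⟫_𝕜 * ⟪b, d⟫_𝕜)
    {U : F → F} (hU : ∀ x y : F, ⟪U x, U y⟫_𝕜 = ⟪x, y⟫_𝕜) {e ψ φ : E} (he : ‖e‖ = 1)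
    (hψ : U (T ψ e) = T ψ ψ) (hφ : U (T φ e) = T φ φ) :
    ⟪ψ, φ⟫_𝕜 * ⟪ψ, φ⟫_𝕜 = ⟪ψ, φ⟫_𝕜 :=
  calc ⟪ψ, φ⟫_𝕜 * ⟪ψ, φ⟫_𝕜 = ⟪T ψ ψ, T φ φ⟫_𝕜 := (hT ψ ψ φ φ).symm
    _ = ⟪U (T ψ e), U (T φ e)⟫_𝕜 := by rw [hψ, hφ]
    _ = ⟪T ψ e, T φ e⟫_𝕜 := hU _ _
    _ = ⟪ψ, φ⟫_𝕜 := by rw [hT, inner_self_eq_one_of_norm_eq_one he, mul_one]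

theorem exists_orthonormal_fin_two_of_two_le_rank (h : 2 ≤ Module.rank 𝕜 E) :
    ∃ v : Fin 2 → E, Orthonormal 𝕜 v := by
  obtain ⟨f, hf⟩ := exists_linearIndependent_of_le_rank (n := 2) (by exact_mod_cast h)
  exact ⟨_, InnerProductSpace.gramSchmidtNormed_orthonormal hf⟩

theorem exists_norm_eq_one_inner_eq_of_two_le_rank (h : 2 ≤ Module.rank 𝕜 E) {t : ℝ}
    (ht : |t| ≤ 1) : ∃ u φ : E, ‖u‖ = 1 ∧ ‖φ‖ = 1 ∧ ⟪u, φ⟫_𝕜 = t := by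
  obtain ⟨v, hv⟩ := exists_orthonormal_fin_two_of_two_le_rank h
  have hs : Real.sqrt (1 - t ^ 2) * Real.sqrt (1 - t ^ 2) = 1 - t ^ 2 :=
    Real.mul_self_sqrt (sub_nonneg.mpr ((sq_le_one_iff_abs_le_one t).mpr ht))
  set φ : E := (t : 𝕜) • v 0 + (Real.sqrt (1 - t ^ 2) : 𝕜) • v 1
  have hv01 : ⟪v 0, v 1⟫_𝕜 = 0 := hv.inner_eq_zero (by decide)
  refine ⟨v 0, φ, hv.1 0, ?_, ?_⟩
  · have hsq := norm_add_sq_eq_norm_sq_add_norm_sq_of_inner_eq_zero (𝕜 := 𝕜) _ _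
      (by rw [inner_smul_left, inner_smul_right, hv01, mul_zero, mul_zero] :
        ⟪(t : 𝕜) • v 0, (Real.sqrt (1 - t ^ 2) : 𝕜) • v 1⟫_𝕜 = 0)
    rw [norm_smul, norm_smul, hv.1 0, hv.1 1, RCLike.norm_ofReal, RCLike.norm_ofReal,
      abs_of_nonneg (Real.sqrt_nonneg _), mul_one, mul_one, abs_mul_abs_self, hs, ← sq, ← sq,
      add_sub_cancel] at hsq
    exact (pow_eq_one_iff_of_nonneg (norm_nonneg φ) two_ne_zero).mp hsq
  · rw [inner_add_right, inner_smul_right, inner_smul_right,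
      inner_self_eq_one_of_norm_eq_one (hv.1 0), hv01, mul_one, mul_zero, add_zero]

end

/-- No-cloning theorem: if `H` is a complex Hilbert space of dimension ≥ 2 and
`HH` plays the role of `H ⊗ H` (via a bilinear map `tprod` whose inner products
factor), then there is no inner-product-preserving (unitary) linear operator `U`
on `HH` and fixed unit state `e` with `U (ψ ⊗ e) = ψ ⊗ ψ` for all unit vectors `ψ`. -/
theorem no_cloning {H HH : Type*}
    [NormedAddCommGroup H] [InnerProductSpace ℂ H]
    [NormedAddCommGroup HH] [InnerProductSpace ℂ HH]
    (tprod : H →ₗ[ℂ] H →ₗ[ℂ] HH)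
    (htp : ∀ a b c d : H, ⟪tprod a b, tprod c d⟫ = ⟪a, c⟫ * ⟪b, d⟫)
    (hdim : 2 ≤ Module.rank ℂ H) :
    ¬ ∃ (U : HH →ₗ[ℂ] HH) (e : H), ‖e‖ = 1 ∧
      (∀ x y : HH, ⟪U x, U y⟫ = ⟪x, y⟫) ∧
      (∀ ψ : H, ‖ψ‖ = 1 → U (tprod ψ e) = tprod ψ ψ) := by
  rintro ⟨U, e, he, hU, hclone⟩
  obtain ⟨u, φ, hu, hφ, huφ⟩ :=
    exists_norm_eq_one_inner_eq_of_two_le_rank hdim (t := 1 / 2) (by norm_num [abs_of_pos])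
  have hidem := inner_mul_self_eq_of_clones (T := fun a b => tprod a b) htp hU he
    (hclone u hu) (hclone φ hφ)
  rw [huφ] at hidem
  norm_num at hidem
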